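/- The sum rule with utility u_M violates merging monotonicity, as witnessed by the following pair of scenarios. Let E=(A,V,c,l) with A={x_1,x_2,y}, c(x_1)=c(x_2)=5, c(y)=10, l=10, and 11 voters: 5 voters whose approval set is {x_1,x_2} and 6 voters whose approval set is {y}. Then {x_1,x_2} is the unique feasible bundle maximizing Σ_{i∈V} u_M(A_i ∩ B, E), and every voter approves either both of x_1,x_2 or neither. Let E'=({x,y},V',c',l) be obtained by merging x_1 and x_2 into a single project x with c'(x)=10, c'(y)=10, where the 5 voters who approved {x_1,x_2} now approve {x} and the 6 others approve {y}. Then {y} is the unique feasible bundle maximizing Σ_{i∈V'} u_M(A'_i ∩ B, E'); in particular the merged project x belongs to no sum-optimal bundle of E'. -/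

import Mathlib

open Finset

/-- A participatory budgeting scenario `E = (A, V, c, l)`: a finite set of projects,
a finite nonempty family of voters each with an approval set of cost at most the budget. -/
structure Scenario (α ι : Type*) [DecidableEq α] where
  projects : Finset α
  voters : Finset ι
  voters_nonempty : voters.Nonempty
  cost : α → ℕ
  budget : ℕ
  approval : ι → Finset α
  approval_subset : ∀ i ∈ voters, approval i ⊆ projects
  approval_feasible : ∀ i ∈ voters, ∑ a ∈ approval i, cost a ≤ budget

variable {α ι : Type*} [DecidableEq α]

/-- Appearance rate `r(S,V)`: the fraction of voters whose approval set contains `S`. -/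
noncomputable def rate (E : Scenario α ι) (S : Finset α) : ℝ :=
  ((E.voters.filter fun i => S ⊆ E.approval i).card : ℝ) / (E.voters.card : ℝ)

/-- The Möbius transform `m(·,E)`: `m(∅,E) = 0`, `m({a},E) = c(a)` and, for `|S| ≥ 2`,
`m(S,E) = max((r(S,V) - ∏_{a∈S} r({a},V))·c(S), max_{a∈S}(-∑_{C⊊S, a∈C} m(C,E)))`. -/
noncomputable def mobius (E : Scenario α ι) : Finset α → ℝ := fun S =>
  if h2 : 2 ≤ S.card then
    max ((rate E S - ∏ a ∈ S, rate E {a}) * (∑ a ∈ S, (E.cost a : ℝ)))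
      (S.sup' (Finset.card_pos.mp (by omega)) fun a =>
        - ∑ C ∈ (S.powerset.filter fun C => C ≠ S ∧ a ∈ C).attach,
            mobius E C.1)
  else ∑ a ∈ S, (E.cost a : ℝ)
termination_by S => S.card
decreasing_by
  have hC := C.2
  simp only [Finset.mem_filter, Finset.mem_powerset] at hC
  exact Finset.card_lt_card (hC.1.ssubset_of_ne hC.2.1)

/-- The utility function `u_M(S,E) = ∑_{C ⊆ S} m(C,E)`. -/
noncomputable def uM (E : Scenario α ι) (S : Finset α) : ℝ :=
  ∑ C ∈ S.powerset, mobius E C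

/-- A bundle is feasible if it consists of projects and fits in the budget. -/
def Feasible (E : Scenario α ι) (B : Finset α) : Prop :=
  B ⊆ E.projects ∧ ∑ a ∈ B, E.cost a ≤ E.budget

/-- The sum over all voters of the satisfaction `u (Aᵢ ∩ B)`. -/
noncomputable def sumScore (E : Scenario α ι) (u : Finset α → ℝ) (B : Finset α) : ℝ :=
  ∑ i ∈ E.voters, u (E.approval i ∩ B)

/-- A feasible bundle maximizing the sum of voters' satisfactions. -/
def IsSumOptimal (E : Scenario α ι) (u : Finset α → ℝ) (B : Finset α) : Prop :=
  Feasible E B ∧ ∀ C, Feasible E C → sumScore E u C ≤ sumScore E u B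

/-- The scenario `E`: projects `x₁ = 0`, `x₂ = 1`, `y = 2` of costs `5, 5, 10`,
budget `10`, with 5 voters approving `{x₁, x₂}` and 6 voters approving `{y}`. -/
def Emerge : Scenario (Fin 3) (Fin 11) where
  projects := {0, 1, 2}
  voters := Finset.univ
  voters_nonempty := ⟨0, Finset.mem_univ 0⟩
  cost := ![5, 5, 10]
  budget := 10
  approval := fun i => if (i : ℕ) < 5 then {0, 1} else {2}
  approval_subset := by decide
  approval_feasible := by decide

/-- The merged scenario `E'`: projects `x = 0` (the merge of `x₁` and `x₂`) and `y = 2`,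
both of cost `10`, budget `10`, with the 5 voters who approved `{x₁, x₂}` now approving
`{x}` and the 6 others approving `{y}`. -/
def Emerge' : Scenario (Fin 3) (Fin 11) where
  projects := {0, 2}
  voters := Finset.univ
  voters_nonempty := ⟨0, Finset.mem_univ 0⟩
  cost := ![10, 10, 10]
  budget := 10
  approval := fun i => if (i : ℕ) < 5 then {0} else {2}
  approval_subset := by decide
  approval_feasible := by decide

lemma mobius_empty (E : Scenario α ι) : mobius E ∅ = 0 := by rw [mobius]; simp

lemma mobius_singleton (E : Scenario α ι) (a : α) : mobius E {a} = E.cost a := by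
  rw [mobius]; simp

lemma rate01 : rate Emerge {0,1} = 5/11 := by
  rw [rate, show (Emerge.voters.filter fun i => ({0,1}:Finset (Fin 3)) ⊆ Emerge.approval i).card = 5 from by decide, show Emerge.voters.card = 11 from by decide]; norm_num

lemma rate0 : rate Emerge {0} = 5/11 := by
  rw [rate, show (Emerge.voters.filter fun i => ({0}:Finset (Fin 3)) ⊆ Emerge.approval i).card = 5 from by decide, show Emerge.voters.card = 11 from by decide]; norm_num

lemma rate1 : rate Emerge {1} = 5/11 := by
  rw [rate, show (Emerge.voters.filter fun i => ({1}:Finset (Fin 3)) ⊆ Emerge.approval i).card = 5 from by decide, show Emerge.voters.card = 11 from by decide]; norm_num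

lemma mobius01 : mobius Emerge {0,1} = 300/121 := by
  rw [mobius, dif_pos (by decide)]
  rw [rate01]
  rw [Finset.prod_insert (by decide), Finset.prod_singleton, rate0, rate1]
  rw [Finset.sum_insert (by decide), Finset.sum_singleton]
  rw [Finset.sup'_insert, Finset.sup'_singleton]
  rw [show (({0,1} : Finset (Fin 3)).powerset.filter fun C => C ≠ {0,1} ∧ (0:Fin 3) ∈ C) = {{0}} from by decide]
  rw [show (({0,1} : Finset (Fin 3)).powerset.filter fun C => C ≠ {0,1} ∧ (1:Fin 3) ∈ C) = {{1}} from by decide]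
  rw [Finset.sum_attach _ (fun C => mobius Emerge C), Finset.sum_attach _ (fun C => mobius Emerge C)]
  rw [Finset.sum_singleton, Finset.sum_singleton, mobius_singleton, mobius_singleton]
  show max _ (max _ _) = _
  norm_num [Emerge]
  exact Finset.singleton_nonempty _
lemma uM_empty (E : Scenario α ι) : uM E ∅ = 0 := by
  simp [uM, mobius_empty]

lemma uM_single (E : Scenario α ι) (a : α) : uM E {a} = E.cost a := by
  rw [uM, show ({a} : Finset α).powerset = {∅, {a}} from rfl,
    Finset.sum_insert (Finset.notMem_singleton.mpr (Ne.symm (Finset.singleton_ne_empty a))), Finset.sum_singleton, mobius_empty, mobius_singleton]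
  ring

lemma uM01 : uM Emerge {0,1} = 1510/121 := by
  rw [uM, show ({0,1} : Finset (Fin 3)).powerset = {∅, {0}, {1}, {0,1}} from by decide]
  rw [Finset.sum_insert (by decide), Finset.sum_insert (by decide),
    Finset.sum_insert (by decide), Finset.sum_singleton,
    mobius_empty, mobius_singleton, mobius_singleton, mobius01]
  norm_num [Emerge]

lemma sumScore_eval (u : Finset (Fin 3) → ℝ) (B : Finset (Fin 3)) :
    sumScore Emerge u B = 5 * u ({0,1} ∩ B) + 6 * u ({2} ∩ B) := by
  simp only [sumScore, show Emerge.voters = Finset.univ from rfl, Fin.sum_univ_succ,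
    Finset.sum_empty, Fin.sum_univ_zero]
  norm_num [Emerge]
  ring

lemma sumScore_eval' (u : Finset (Fin 3) → ℝ) (B : Finset (Fin 3)) :
    sumScore Emerge' u B = 5 * u ({0} ∩ B) + 6 * u ({2} ∩ B) := by
  simp only [sumScore, show Emerge'.voters = Finset.univ from rfl, Fin.sum_univ_succ,
    Finset.sum_empty, Fin.sum_univ_zero]
  norm_num [Emerge']
  ring
lemma c0 : Emerge.cost 0 = 5 := rfl
lemma c1 : Emerge.cost 1 = 5 := rfl
lemma c2 : Emerge.cost 2 = 10 := rfl
lemma c0' : Emerge'.cost 0 = 10 := rfl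
lemma c2' : Emerge'.cost 2 = 10 := rfl

lemma enum3 (C : Finset (Fin 3)) : C = ∅ ∨ C = {0} ∨ C = {1} ∨ C = {2} ∨ C = {0,1}
    ∨ C = {0,2} ∨ C = {1,2} ∨ C = {0,1,2} := by
  revert C; decide

lemma score_le (C : Finset (Fin 3)) (hC : Feasible Emerge C) :
    sumScore Emerge (uM Emerge) C ≤ 7550/121 := by
  rcases enum3 C with rfl|rfl|rfl|rfl|rfl|rfl|rfl|rfl <;>
    first
      | exact absurd hC.2 (by decide)
      | (rw [sumScore_eval]
         simp only [show ({0,1} : Finset (Fin 3)) ∩ ∅ = ∅ from by decide,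
           show ({2} : Finset (Fin 3)) ∩ ∅ = ∅ from by decide,
           show ({0,1} : Finset (Fin 3)) ∩ {0} = {0} from by decide,
           show ({2} : Finset (Fin 3)) ∩ {0} = ∅ from by decide,
           show ({0,1} : Finset (Fin 3)) ∩ {1} = {1} from by decide,
           show ({2} : Finset (Fin 3)) ∩ {1} = ∅ from by decide,
           show ({0,1} : Finset (Fin 3)) ∩ {2} = ∅ from by decide,
           show ({2} : Finset (Fin 3)) ∩ {2} = {2} from by decide,
           show ({0,1} : Finset (Fin 3)) ∩ {0,1} = {0,1} from by decide,
           show ({2} : Finset (Fin 3)) ∩ {0,1} = ∅ from by decide,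
           uM_empty, uM_single, uM01, c0, c1, c2]
         norm_num)
lemma score01 : sumScore Emerge (uM Emerge) {0,1} = 7550/121 := by
  rw [sumScore_eval,
    show ({0,1} : Finset (Fin 3)) ∩ {0,1} = {0,1} from by decide,
    show ({2} : Finset (Fin 3)) ∩ {0,1} = ∅ from by decide, uM_empty, uM01]
  norm_num

lemma score_lt (C : Finset (Fin 3)) (hC : Feasible Emerge C) (hne : C ≠ {0,1}) :
    sumScore Emerge (uM Emerge) C ≤ 60 := by
  rcases enum3 C with rfl|rfl|rfl|rfl|rfl|rfl|rfl|rfl <;>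
    first
      | exact absurd rfl hne
      | exact absurd hC.2 (by decide)
      | (rw [sumScore_eval]
         simp only [show ({0,1} : Finset (Fin 3)) ∩ ∅ = ∅ from by decide,
           show ({2} : Finset (Fin 3)) ∩ ∅ = ∅ from by decide,
           show ({0,1} : Finset (Fin 3)) ∩ {0} = {0} from by decide,
           show ({2} : Finset (Fin 3)) ∩ {0} = ∅ from by decide,
           show ({0,1} : Finset (Fin 3)) ∩ {1} = {1} from by decide,
           show ({2} : Finset (Fin 3)) ∩ {1} = ∅ from by decide,
           show ({0,1} : Finset (Fin 3)) ∩ {2} = ∅ from by decide,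
           show ({2} : Finset (Fin 3)) ∩ {2} = {2} from by decide,
           uM_empty, uM_single, c0, c1, c2]
         norm_num)

lemma score2' : sumScore Emerge' (uM Emerge') {2} = 60 := by
  rw [sumScore_eval',
    show ({0} : Finset (Fin 3)) ∩ {2} = ∅ from by decide,
    show ({2} : Finset (Fin 3)) ∩ {2} = {2} from by decide, uM_empty, uM_single, c2']
  norm_num

lemma score_le' (C : Finset (Fin 3)) (hC : Feasible Emerge' C) (hne : C ≠ {2}) :
    sumScore Emerge' (uM Emerge') C ≤ 50 := by
  rcases enum3 C with rfl|rfl|rfl|rfl|rfl|rfl|rfl|rfl <;>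
    first
      | exact absurd rfl hne
      | exact absurd hC.2 (by decide)
      | exact absurd (hC.1 (by decide : (1:Fin 3) ∈ _)) (by decide)
      | (rw [sumScore_eval']
         simp only [show ({0} : Finset (Fin 3)) ∩ ∅ = ∅ from by decide,
           show ({2} : Finset (Fin 3)) ∩ ∅ = ∅ from by decide,
           show ({0} : Finset (Fin 3)) ∩ {0} = {0} from by decide,
           show ({2} : Finset (Fin 3)) ∩ {0} = ∅ from by decide,
           uM_empty, uM_single, c0']
         norm_num)

/-- The sum rule with utility `u_M` violates merging monotonicity: in `E` the unique
sum-optimal bundle is `{x₁, x₂}`, every voter approves both of `x₁, x₂` or neither, yet in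
the merged scenario `E'` the unique sum-optimal bundle is `{y}`, so the merged project `x`
belongs to no sum-optimal bundle of `E'`. -/
theorem uM_sum_violates_merging_monotonicity :
    (IsSumOptimal Emerge (uM Emerge) {0, 1} ∧
      ∀ B, IsSumOptimal Emerge (uM Emerge) B → B = {0, 1}) ∧
    (∀ i ∈ Emerge.voters,
      ({0, 1} : Finset (Fin 3)) ⊆ Emerge.approval i ∨
        ({0, 1} : Finset (Fin 3)) ∩ Emerge.approval i = ∅) ∧
    (IsSumOptimal Emerge' (uM Emerge') {2} ∧
      ∀ B, IsSumOptimal Emerge' (uM Emerge') B → B = {2}) ∧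
    (∀ B, IsSumOptimal Emerge' (uM Emerge') B → (0 : Fin 3) ∉ B) := by
  have huniq : ∀ B, IsSumOptimal Emerge (uM Emerge) B → B = {0, 1} := by
    intro B hB
    by_contra hne
    have h1 := hB.2 {0,1} ⟨by decide, by decide⟩
    have h2 := score_lt B hB.1 hne
    rw [score01] at h1
    linarith
  have huniq' : ∀ B, IsSumOptimal Emerge' (uM Emerge') B → B = {2} := by
    intro B hB
    by_contra hne
    have h1 := hB.2 {2} ⟨by decide, by decide⟩
    have h2 := score_le' B hB.1 hne
    rw [score2'] at h1
    linarith
  refine ⟨⟨⟨⟨by decide, by decide⟩, fun C hC => by rw [score01]; exact score_le C hC⟩, huniq⟩,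
    by decide, ⟨⟨⟨by decide, by decide⟩, fun C hC => ?_⟩, huniq'⟩,
    fun B hB => by rw [huniq' B hB]; decide⟩
  rcases eq_or_ne C {2} with rfl|hne
  · exact le_refl _
  · rw [score2']; linarith [score_le' C hC hne]
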